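/- Suppose 0 < 1/n ≪ c ≪ α ≪ 1 and G is an oriented graph on n vertices with δ⁰(G) ≥ (1/2 - c)n. Then for every vertex v, the set of vertices y ≠ v such that v and y are (H(G), α, 1)-reachable has size at least (1/8 - 10α)n. -/

import Mathlib

open Finset
open scoped Classical

/-- An oriented graph: no loops and no pair of antiparallel edges. -/
def IsOriented {n : ℕ} (G : Fin n → Fin n → Prop) : Prop :=
  (∀ v, ¬ G v v) ∧ ∀ u v : Fin n, G u v → ¬ G v u

/-- `d⁺(v, A)`: number of out-neighbors of `v` in `A`. -/
noncomputable def outDegOn {n : ℕ} (G : Fin n → Fin n → Prop) (v : Fin n)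
    (A : Finset (Fin n)) : ℕ :=
  (A.filter fun u => G v u).card

/-- `d⁻(v, A)`: number of in-neighbors of `v` in `A`. -/
noncomputable def inDegOn {n : ℕ} (G : Fin n → Fin n → Prop) (v : Fin n)
    (A : Finset (Fin n)) : ℕ :=
  (A.filter fun u => G u v).card

/-- outdegree `d⁺(v)`. -/
noncomputable def outDeg {n : ℕ} (G : Fin n → Fin n → Prop) (v : Fin n) : ℕ :=
  outDegOn G v univ

/-- indegree `d⁻(v)`. -/
noncomputable def inDeg {n : ℕ} (G : Fin n → Fin n → Prop) (v : Fin n) : ℕ :=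
  inDegOn G v univ

/-- The minimum semidegree condition `δ⁰(G) ≥ b`. -/
def MinSemidegreeGE {n : ℕ} (G : Fin n → Fin n → Prop) (b : ℝ) : Prop :=
  ∀ v : Fin n, b ≤ (outDeg G v : ℝ) ∧ b ≤ (inDeg G v : ℝ)

/-- `e⁺(A, B)`: number of edges directed from `A` to `B`. -/
noncomputable def eOut {n : ℕ} (G : Fin n → Fin n → Prop) (A B : Finset (Fin n)) : ℕ :=
  ∑ a ∈ A, outDegOn G a B

/-- `s` is the vertex set of a cyclic triangle. -/
def IsCycTri {n : ℕ} (G : Fin n → Fin n → Prop) (s : Finset (Fin n)) : Prop :=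
  ∃ a b c : Fin n, G a b ∧ G b c ∧ G c a ∧ s = {a, b, c}

/-- `s` is the vertex set of a transitive triangle. -/
def IsTrnTri {n : ℕ} (G : Fin n → Fin n → Prop) (s : Finset (Fin n)) : Prop :=
  ∃ a b c : Fin n, G a b ∧ G b c ∧ G a c ∧ s = {a, b, c}

/-- `cyc(A)`: number of cyclic triangles with all vertices in `A`. -/
noncomputable def cycIn {n : ℕ} (G : Fin n → Fin n → Prop) (A : Finset (Fin n)) : ℕ :=
  ((A.powersetCard 3).filter fun s => IsCycTri G s).card

/-- `trn(A)`: number of transitive triangles with all vertices in `A`. -/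
noncomputable def trnIn {n : ℕ} (G : Fin n → Fin n → Prop) (A : Finset (Fin n)) : ℕ :=
  ((A.powersetCard 3).filter fun s => IsTrnTri G s).card

/-- `cyc(A, B, C)`: number of cyclic triangles with one vertex in each of `A`, `B`, `C`
(in the sense of some labeling of its vertex set). -/
noncomputable def cyc3 {n : ℕ} (G : Fin n → Fin n → Prop) (A B C : Finset (Fin n)) : ℕ :=
  (((univ : Finset (Fin n)).powersetCard 3).filter fun s =>
    IsCycTri G s ∧ ∃ x ∈ A, ∃ y ∈ B, ∃ z ∈ C, s = ({x, y, z} : Finset (Fin n))).card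

/-- A cyclic triangle tiling: a collection of vertex-disjoint cyclic triangles. -/
def IsCycTiling {n : ℕ} (G : Fin n → Fin n → Prop) (C : Finset (Finset (Fin n))) : Prop :=
  (∀ s ∈ C, IsCycTri G s) ∧ ∀ s ∈ C, ∀ t ∈ C, s ≠ t → Disjoint s t

/-- A cyclic triangle factor: a tiling covering every vertex. -/
def IsCycFactor {n : ℕ} (G : Fin n → Fin n → Prop) (C : Finset (Finset (Fin n))) : Prop :=
  IsCycTiling G C ∧ C.biUnion id = univ

/-- `W` can be perfectly covered by vertex-disjoint cyclic triangles
(i.e. `H(G)[W]` has a perfect matching). -/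
def HasCycPM {n : ℕ} (G : Fin n → Fin n → Prop) (W : Finset (Fin n)) : Prop :=
  ∃ C : Finset (Finset (Fin n)), IsCycTiling G C ∧ C.biUnion id = W

/-- The number of `(H(G), x, y)`-linking `(3ℓ-1)`-sets. -/
noncomputable def linkCount {n : ℕ} (G : Fin n → Fin n → Prop) (ℓ : ℕ) (x y : Fin n) : ℕ :=
  (((univ : Finset (Fin n)).powersetCard (3 * ℓ - 1)).filter fun S =>
    x ∉ S ∧ y ∉ S ∧ HasCycPM G (insert x S) ∧ HasCycPM G (insert y S)).card

/-!
Let `A = N⁺(v)` and `B = N⁻(v)`. Each edge `x → z` from `A` to `B` closes the cyclic triangle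
`v x z`, and every `y` with `z → y → x` turns `{x, z}` into a linking 2-set of `v` and `y`.
The minimum semidegree forces `e(A, B) ≳ n²/8` and, for each `x ∈ A`, about `m_x²/2` choices of
`(z, y)`, where `m_x = |N⁺(x) ∩ B|`; by Cauchy–Schwarz there are `≳ n³/64` such triples
`(y, x, z)`. No single `y` lies in more than `(1/8 + c)n²` of them, because at most that many
edges leave `N⁺(y)`. Hence `≳ n/8` vertices `y` lie in at least `αn²` triples each.
-/

variable {n : ℕ} (G : Fin n → Fin n → Prop)

noncomputable def outNbhd (v : Fin n) : Finset (Fin n) := univ.filter (G v ·)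

noncomputable def inNbhd (v : Fin n) : Finset (Fin n) := univ.filter (G · v)

section Degrees

variable {G}

lemma IsOriented.ne (hG : IsOriented G) {a b : Fin n} (h : G a b) : a ≠ b :=
  fun e => hG.1 a (e ▸ h)

lemma outDegOn_le_card (v : Fin n) (S : Finset (Fin n)) : outDegOn G v S ≤ #S :=
  card_filter_le _ _

lemma outDegOn_union {v : Fin n} {S T : Finset (Fin n)} (hST : Disjoint S T) :
    outDegOn G v (S ∪ T) = outDegOn G v S + outDegOn G v T := by
  rw [outDegOn, filter_union, card_union_of_disjoint (disjoint_filter_filter hST)]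
  rfl

lemma outDegOn_add_outDegOn_compl (v : Fin n) (S : Finset (Fin n)) :
    outDegOn G v S + outDegOn G v Sᶜ = outDeg G v := by
  rw [← outDegOn_union disjoint_compl_right, union_compl]
  rfl

lemma inDegOn_add_inDegOn_compl (v : Fin n) (S : Finset (Fin n)) :
    inDegOn G v S + inDegOn G v Sᶜ = inDeg G v := by
  rw [inDegOn, inDegOn, ← card_union_of_disjoint
    (disjoint_filter_filter disjoint_compl_right), ← filter_union, union_compl]
  rfl

lemma outDegOn_add_inDegOn_le (hG : IsOriented G) (v : Fin n) (S : Finset (Fin n)) :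
    outDegOn G v S + inDegOn G v S ≤ #S := by
  rw [outDegOn, inDegOn, ← card_union_of_disjoint]
  · exact card_le_card (union_subset (filter_subset _ _) (filter_subset _ _))
  · exact disjoint_filter.2 fun u _ hvu huv => hG.2 v u hvu huv

lemma outDeg_add_inDeg_le (hG : IsOriented G) (v : Fin n) : outDeg G v + inDeg G v ≤ n := by
  have := outDegOn_add_inDegOn_le hG v univ
  rwa [card_univ, Fintype.card_fin] at this

lemma eOut_eq_sum_inDegOn (A B : Finset (Fin n)) : eOut G A B = ∑ b ∈ B, inDegOn G b A := by
  simp only [eOut, outDegOn, inDegOn, card_filter]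
  exact sum_comm

lemma eOut_eq_card_filter (A B : Finset (Fin n)) :
    eOut G A B = #((A ×ˢ B).filter fun p => G p.1 p.2) := by
  simp only [eOut, outDegOn, card_filter, sum_product]

lemma eOut_add_eOut_le (hG : IsOriented G) (A B : Finset (Fin n)) :
    eOut G A B + eOut G B A ≤ #A * #B := by
  rw [eOut_eq_sum_inDegOn B A, eOut, ← sum_add_distrib, ← smul_eq_mul]
  exact sum_le_card_nsmul _ _ _ fun a _ => outDegOn_add_inDegOn_le hG a B

end Degrees

section MinSemidegree

variable {G} {c : ℝ}

lemma eOut_compl_le (hG : IsOriented G) (hδ : MinSemidegreeGE G ((1/2 - c) * n)) (hc : 0 ≤ c)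
    (X : Finset (Fin n)) : (eOut G X Xᶜ : ℝ) ≤ (1/8 + c) * n ^ 2 := by
  have hout : ∑ x ∈ X, outDeg G x = eOut G X X + eOut G X Xᶜ := by
    simp only [eOut, ← sum_add_distrib, outDegOn_add_outDegOn_compl]
  have hin : ∑ x ∈ X, inDeg G x = eOut G X X + eOut G Xᶜ X := by
    simp only [eOut_eq_sum_inDegOn X X, eOut_eq_sum_inDegOn Xᶜ X, ← sum_add_distrib,
      inDegOn_add_inDegOn_compl]
  have hcross := eOut_add_eOut_le hG X Xᶜ
  have hcompl : #X + #Xᶜ = n := by rw [card_add_card_compl, Fintype.card_fin]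
  have hgap : ∑ x ∈ X, (outDeg G x : ℝ) ≤ ∑ x ∈ X, ((inDeg G x : ℝ) + 2 * c * n) :=
    sum_le_sum fun x _ => by
      have h : ((outDeg G x + inDeg G x : ℕ) : ℝ) ≤ n := by
        exact_mod_cast outDeg_add_inDeg_le hG x
      push_cast at h
      linarith [(hδ x).2]
  rw [sum_add_distrib, sum_const, nsmul_eq_mul] at hgap
  have hout' : ∑ x ∈ X, (outDeg G x : ℝ) = eOut G X X + eOut G X Xᶜ := by exact_mod_cast hout
  have hin' : ∑ x ∈ X, (inDeg G x : ℝ) = eOut G X X + eOut G Xᶜ X := by exact_mod_cast hin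
  have hcross' : (eOut G X Xᶜ : ℝ) + eOut G Xᶜ X ≤ #X * #Xᶜ := by exact_mod_cast hcross
  have hcompl' : (#X : ℝ) + #Xᶜ = n := by exact_mod_cast hcompl
  nlinarith [sq_nonneg ((#X : ℝ) - #Xᶜ), mul_nonneg hc (Nat.cast_nonneg (α := ℝ) #Xᶜ),
    mul_nonneg hc (Nat.cast_nonneg (α := ℝ) n)]

lemma sq_div_two_sub_le_eOut (hG : IsOriented G) (hδ : MinSemidegreeGE G ((1/2 - c) * n))
    {Z W : Finset (Fin n)} (hZW : Disjoint Z W) (hW : (1/2 - c) * n ≤ #W) :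
    (#Z : ℝ) ^ 2 / 2 - 2 * c * n * #Z ≤ eOut G Z W := by
  have hsplit : ∀ z, outDeg G z ≤ outDegOn G z Z + outDegOn G z W + #(Z ∪ W)ᶜ := fun z => by
    rw [← outDegOn_add_outDegOn_compl z (Z ∪ W), outDegOn_union hZW]
    exact Nat.add_le_add_left (outDegOn_le_card z _) _
  have hsum : ∑ z ∈ Z, outDeg G z ≤ eOut G Z Z + eOut G Z W + #Z * #(Z ∪ W)ᶜ := by
    calc _ ≤ ∑ z ∈ Z, (outDegOn G z Z + outDegOn G z W + #(Z ∪ W)ᶜ) :=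
          sum_le_sum fun z _ => hsplit z
      _ = _ := by rw [sum_add_distrib, sum_add_distrib, sum_const, smul_eq_mul]; rfl
  have hlow : #Z • ((1/2 - c) * n) ≤ ∑ z ∈ Z, (outDeg G z : ℝ) :=
    card_nsmul_le_sum _ _ _ fun z _ => (hδ z).1
  have hZZ := eOut_add_eOut_le hG Z Z
  have hcompl : #Z + #W + #(Z ∪ W)ᶜ = n := by
    rw [← card_union_of_disjoint hZW, card_add_card_compl, Fintype.card_fin]
  rw [nsmul_eq_mul] at hlow
  have hsum' : ∑ z ∈ Z, (outDeg G z : ℝ) ≤ eOut G Z Z + eOut G Z W + #Z * #(Z ∪ W)ᶜ := by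
    exact_mod_cast hsum
  have hZZ' : (eOut G Z Z : ℝ) + eOut G Z Z ≤ #Z * #Z := by exact_mod_cast hZZ
  have hcompl' : (#Z : ℝ) + #W + #(Z ∪ W)ᶜ = n := by exact_mod_cast hcompl
  nlinarith [mul_le_mul_of_nonneg_left hW (Nat.cast_nonneg (α := ℝ) #Z)]

end MinSemidegree

lemma cubic_lower_bound {a c n E Q : ℝ} (hc : 0 ≤ c) (hc' : c ≤ 1/100) (hn : 0 < n)
    (ha : (1/2 - c) * n ≤ a) (hE : a ^ 2 / 2 - 2 * c * n * a ≤ E)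
    (hQ : E ^ 2 ≤ 2 * a * (Q + 2 * c * n * E)) : (1/64 - c) * n ^ 3 ≤ Q := by
  have hcn : 0 ≤ c * n := mul_nonneg hc hn.le
  have ha0 : 0 < a := lt_of_lt_of_le (by nlinarith) ha
  have h1 : 0 ≤ a / 2 - 6 * c * n := by nlinarith
  -- `E ↦ E ^ 2 - 4 c n a E` is increasing for `E ≥ 2 c n a`, and `E ≥ a (a/2 - 2cn) ≥ 2cna`.
  have hmono : a ^ 2 * ((a / 2 - 2 * c * n) * (a / 2 - 6 * c * n)) ≤ 2 * a * Q := by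
    nlinarith [mul_nonneg (sub_nonneg.2 hE) (by nlinarith : 0 ≤ E + (a ^ 2 / 2 - 2 * c * n * a)
      - 4 * c * n * a)]
  have hdiv : a * ((a / 2 - 2 * c * n) * (a / 2 - 6 * c * n)) ≤ 2 * Q := by
    nlinarith
  have h2 : (1/4 - 5/2 * c) * n ≤ a / 2 - 2 * c * n := by linarith
  have h3 : (1/4 - 13/2 * c) * n ≤ a / 2 - 6 * c * n := by linarith
  have hprod : ((1/2 - c) * n) * (((1/4 - 5/2 * c) * n) * ((1/4 - 13/2 * c) * n))
      ≤ a * ((a / 2 - 2 * c * n) * (a / 2 - 6 * c * n)) := by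
    have h2' : 0 ≤ (1/4 - 5/2 * c) * n := by nlinarith
    have h3' : 0 ≤ (1/4 - 13/2 * c) * n := by nlinarith
    exact mul_le_mul ha (mul_le_mul h2 h3 h3' (h2'.trans h2)) (mul_nonneg h2' h3') ha0.le
  have hn3 : 0 ≤ n ^ 3 := by positivity
  nlinarith [mul_nonneg hc hn3, mul_nonneg (mul_nonneg hc hc) hn3,
    mul_nonneg (mul_nonneg (mul_nonneg hc hc) hc) hn3]

lemma sum_le_card_filter_mul_add_card_mul {ι : Type*} (s : Finset ι) (p : ι → Prop)
    [DecidablePred p] {f : ι → ℝ} {M K : ℝ} (hM : ∀ i ∈ s, f i ≤ M)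
    (hK : ∀ i ∈ s, ¬ p i → f i ≤ K) (hK0 : 0 ≤ K) :
    ∑ i ∈ s, f i ≤ #(s.filter p) * M + #s * K := by
  rw [← sum_filter_add_sum_filter_not s p]
  gcongr
  · rw [← nsmul_eq_mul]
    exact sum_le_card_nsmul _ _ _ fun i hi => hM i (mem_filter.1 hi).1
  · calc ∑ i ∈ s.filter (¬ p ·), f i ≤ #(s.filter (¬ p ·)) • K :=
          sum_le_card_nsmul _ _ _ fun i hi => hK i (mem_filter.1 hi).1 (mem_filter.1 hi).2
      _ ≤ #s • K := by gcongr; exact filter_subset _ _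
      _ = #s * K := nsmul_eq_mul _ _

noncomputable def linkPairs (v y : Fin n) : Finset (Fin n × Fin n) :=
  univ.filter fun p => G v p.1 ∧ G p.1 p.2 ∧ G p.2 v ∧ G y p.1 ∧ G p.2 y

section LinkPairs

variable {G} {c : ℝ}

lemma hasCycPM_of_isCycTri {s : Finset (Fin n)} (hs : IsCycTri G s) : HasCycPM G s :=
  ⟨{s}, ⟨by simpa using hs, by simp⟩, by simp⟩

lemma card_linkPairs_le_linkCount (hG : IsOriented G) (v y : Fin n) :
    #(linkPairs G v y) ≤ linkCount G 1 v y := by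
  refine card_le_card_of_injOn (fun p => {p.1, p.2}) ?_ ?_
  · rintro ⟨x, z⟩ hp
    obtain ⟨hvx, hxz, hzv, hyx, hzy⟩ := (mem_filter.1 hp).2
    simp only [coe_filter, Set.mem_ofPred_eq, mem_powersetCard, subset_univ,
      true_and, mem_insert, mem_singleton, not_or]
    refine ⟨card_pair (hG.ne hxz), ⟨hG.ne hvx, (hG.ne hzv).symm⟩, ⟨hG.ne hyx, (hG.ne hzy).symm⟩,
      hasCycPM_of_isCycTri ⟨v, x, z, hvx, hxz, hzv, rfl⟩,
      hasCycPM_of_isCycTri ⟨y, x, z, hyx, hxz, hzy, rfl⟩⟩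
  · rintro ⟨x, z⟩ hp ⟨x', z'⟩ hq hpq
    obtain ⟨hvx, -, hzv, -⟩ := (mem_filter.1 hp).2
    obtain ⟨hvx', -, hzv', -⟩ := (mem_filter.1 hq).2
    replace hpq := congrArg ((↑) : Finset (Fin n) → Set (Fin n)) hpq
    simp only [coe_pair, Set.pair_eq_pair_iff] at hpq
    rcases hpq with ⟨rfl, rfl⟩ | ⟨rfl, rfl⟩
    · rfl
    · exact (hG.2 _ _ hvx hzv').elim

lemma card_linkPairs_le_eOut (hG : IsOriented G) (v y : Fin n) :
    #(linkPairs G v y) ≤ eOut G (outNbhd G y) (outNbhd G y)ᶜ := by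
  rw [eOut_eq_card_filter]
  refine card_le_card fun p hp => ?_
  obtain ⟨-, hxz, -, hyx, hzy⟩ := (mem_filter.1 hp).2
  simp only [outNbhd, mem_filter, mem_product, mem_compl, mem_univ, true_and]
  exact ⟨⟨hyx, hG.2 _ _ hzy⟩, hxz⟩

lemma sum_card_linkPairs (v : Fin n) :
    ∑ y, #(linkPairs G v y)
      = ∑ x ∈ outNbhd G v, eOut G ((inNbhd G v).filter (G x ·)) (inNbhd G x) := by
  simp only [linkPairs, outNbhd, inNbhd, eOut, outDegOn, card_filter, sum_filter,
    ← univ_product_univ, sum_product]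
  rw [sum_comm]
  refine sum_congr rfl fun x _ => ?_
  rw [sum_comm]
  by_cases hvx : G v x
  · simp only [hvx, if_true, true_and]
    refine sum_congr rfl fun z _ => ?_
    by_cases hzv : G z v <;> by_cases hxz : G x z <;>
      simp only [hzv, hxz, ite_and, if_true, if_false, true_and, false_and, sum_const_zero]
  · simp [hvx]

lemma le_sum_card_linkPairs (hG : IsOriented G) (hδ : MinSemidegreeGE G ((1/2 - c) * n))
    (hc : 0 ≤ c) (hc' : c ≤ 1/100) (hn : 0 < n) (v : Fin n) :
    (1/64 - c) * n ^ 3 ≤ ∑ y, (#(linkPairs G v y) : ℝ) := by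
  set A := outNbhd G v
  set B := inNbhd G v
  have hsum : ∑ y, (#(linkPairs G v y) : ℝ)
      = ∑ x ∈ A, (eOut G (B.filter (G x ·)) (inNbhd G x) : ℝ) := by
    exact_mod_cast sum_card_linkPairs v
  have hAB : Disjoint A B := disjoint_filter.2 fun _ _ hvx hxv => hG.2 _ _ hvx hxv
  have hE := sq_div_two_sub_le_eOut hG hδ hAB (hδ v).2
  have hM : ∀ x ∈ A, (outDegOn G x B : ℝ) ^ 2 / 2 - 2 * c * n * outDegOn G x B
      ≤ eOut G (B.filter (G x ·)) (inNbhd G x) := fun x _ =>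
    sq_div_two_sub_le_eOut hG hδ
      (disjoint_left.2 fun _ hz hz' => hG.2 _ _ (mem_filter.1 hz).2 (mem_filter.1 hz').2)
      (hδ x).2
  have hMsum := sum_le_sum hM
  rw [sum_sub_distrib, ← sum_div, ← mul_sum] at hMsum
  have hCS := sq_sum_le_card_mul_sum_sq (s := A) (f := fun x => (outDegOn G x B : ℝ))
  have hEsum : (eOut G A B : ℝ) = ∑ x ∈ A, (outDegOn G x B : ℝ) := by
    simp only [eOut, Nat.cast_sum]
  rw [hsum]
  refine cubic_lower_bound (a := #A) hc hc' (by exact_mod_cast hn) (hδ v).1 hE ?_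
  rw [hEsum]
  nlinarith [mul_le_mul_of_nonneg_left hMsum (Nat.cast_nonneg (α := ℝ) #A)]

lemma le_card_reachable (hG : IsOriented G) (hδ : MinSemidegreeGE G ((1/2 - c) * n))
    {α : ℝ} (hc : 0 ≤ c) (hc' : c ≤ 1/100) (hcα : c ≤ α / 10) (hαn : 1 ≤ α * n) (v : Fin n) :
    (1/8 - 10 * α) * n ≤
      (#(univ.filter fun y => y ≠ v ∧ α * (n : ℝ) ^ 2 ≤ (linkCount G 1 v y : ℝ)) : ℝ) := by
  have hn : (0 : ℝ) < n := by nlinarith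
  have hα : 0 < α := by nlinarith
  have hupper : ∀ y, (#(linkPairs G v y) : ℝ) ≤ (1/8 + c) * n ^ 2 := fun y =>
    le_trans (by exact_mod_cast card_linkPairs_le_eOut hG v y) (eOut_compl_le hG hδ hc _)
  have hrest := sum_le_card_filter_mul_add_card_mul (univ.erase v)
    (fun y => α * (n : ℝ) ^ 2 ≤ (linkCount G 1 v y : ℝ)) (fun y _ => hupper y)
    (fun y _ hy => (Nat.cast_le.2 (card_linkPairs_le_linkCount hG v y)).trans (not_le.1 hy).le)
    (by positivity)
  have hQ := le_sum_card_linkPairs hG hδ hc hc' (by exact_mod_cast hn) v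
  rw [← add_sum_erase _ _ (mem_univ v)] at hQ
  have hfilter : (univ.erase v).filter (fun y => α * (n : ℝ) ^ 2 ≤ (linkCount G 1 v y : ℝ))
      = univ.filter fun y => y ≠ v ∧ α * (n : ℝ) ^ 2 ≤ (linkCount G 1 v y : ℝ) := by
    ext y
    simp
  have herase : (#(univ.erase v) : ℝ) ≤ n := by
    exact_mod_cast (card_erase_le).trans (card_univ.trans (Fintype.card_fin n)).le
  rw [hfilter] at hrest
  set g : ℝ := (#(univ.filter fun y => y ≠ v ∧ α * (n : ℝ) ^ 2 ≤ (linkCount G 1 v y : ℝ)) : ℝ)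
  have hcube : (1/64 - c) * n * n ^ 2 ≤ ((g + 1) * (1/8 + c) + α * n) * n ^ 2 := by
    nlinarith [hupper v, mul_le_mul_of_nonneg_right herase (by positivity : 0 ≤ α * (n : ℝ) ^ 2)]
  have hcount := le_of_mul_le_mul_right hcube (by positivity)
  by_contra! hlt
  nlinarith [mul_lt_mul_of_pos_right hlt (by linarith : (0:ℝ) < 1/8 + c), mul_nonneg hc hn.le]

end LinkPairs

theorem stmt_15 :
    ∃ α₀ > (0:ℝ), ∀ α : ℝ, 0 < α → α ≤ α₀ →
    ∃ c₀ > (0:ℝ), ∀ c : ℝ, 0 < c → c ≤ c₀ →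
    ∃ N : ℕ, ∀ n : ℕ, N ≤ n → ∀ G : Fin n → Fin n → Prop, IsOriented G →
      MinSemidegreeGE G ((1/2 - c) * n) →
      ∀ v : Fin n,
        (1/8 - 10 * α) * n ≤
          (((univ : Finset (Fin n)).filter fun y =>
            y ≠ v ∧ α * (n : ℝ)^2 ≤ (linkCount G 1 v y : ℝ)).card : ℝ) := by
  refine ⟨1/100, by norm_num, fun α hα hα₀ => ⟨α / 10, by positivity, fun c hc hc₀ =>
    ⟨⌈1 / α⌉₊, fun n hN G hG hδ v => ?_⟩⟩⟩
  have hαn : 1 ≤ α * n := by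
    have h := (Nat.le_ceil (1 / α)).trans (Nat.cast_le.2 hN : (⌈1 / α⌉₊ : ℝ) ≤ n)
    rwa [div_le_iff₀ hα, mul_comm] at h
  exact le_card_reachable hG hδ hc.le (by linarith) hc₀ hαn v
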